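/- Let (R, m) be a commutative Noetherian local ring and let M and N be finitely generated R-modules with h = pd_R(N) < ∞. If Ext^i_R(M, R) = 0 for all 1 ≤ i ≤ s + h + 1 for some integer s ≥ 0, then Ext^i_R(M, N) = 0 for all 1 ≤ i ≤ s + 1. -/

import Mathlib

open CategoryTheory IsLocalRing RingTheory.Sequence

/-- The Ext group `Ext^i_R(M, N)` as an `R`-module. -/
noncomputable def extMod (R : Type) [CommRing R] (M N : ModuleCat R) (i : ℕ) : ModuleCat R :=
  ((_root_.Ext R (ModuleCat R) i).obj (Opposite.op M)).obj N

/-- The depth of a module over a Noetherian local ring: the supremum of the lengths of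
regular sequences on `M` consisting of elements of the maximal ideal.  (We use weakly
regular sequences so that the zero module has depth `⊤`; for finitely generated nonzero
modules this is the length of a maximal `M`-regular sequence in the maximal ideal.) -/
noncomputable def rdepth (R : Type) [CommRing R] [IsLocalRing R]
    (M : Type) [AddCommGroup M] [Module R M] : ℕ∞ :=
  sSup {n : ℕ∞ | ∃ rs : List R, (rs.length : ℕ∞) = n ∧
    (∀ x ∈ rs, x ∈ maximalIdeal R) ∧ IsWeaklyRegular M rs}

/-- The projective dimension of a module, characterized via vanishing of Ext:
`pdim R N` is the least `m : ℕ` such that `Ext^i_R(N, X) = 0` for all `i > m` and all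
modules `X`, and `⊤` if no such `m` exists. -/
noncomputable def pdim (R : Type) [CommRing R] (N : ModuleCat R) : ℕ∞ :=
  sInf {n : ℕ∞ | ∃ m : ℕ, n = (m : ℕ∞) ∧
    ∀ i : ℕ, m < i → ∀ X : ModuleCat R, Subsingleton (extMod R N X i)}

/-- The injective dimension of a module, characterized via vanishing of Ext:
`idim R N` is the least `m : ℕ` such that `Ext^i_R(X, N) = 0` for all `i > m` and all
modules `X`, and `⊤` if no such `m` exists. -/
noncomputable def idim (R : Type) [CommRing R] (N : ModuleCat R) : ℕ∞ :=
  sInf {n : ℕ∞ | ∃ m : ℕ, n = (m : ℕ∞) ∧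
    ∀ i : ℕ, m < i → ∀ X : ModuleCat R, Subsingleton (extMod R X N i)}

/-! Induction on `h`. For `h = 0`, `N` is a direct summand of some `Rⁿ`, so `Ext^i(M, N)` is a
summand of `Ext^i(M, R)ⁿ`. For `h > 0`, choose `0 → K → F → N → 0` with `F` finite free; then `K`
is finitely generated (`R` is Noetherian) with `pd K < h`, and the long exact sequence
`Ext^i(M, F) → Ext^i(M, N) → Ext^{i+1}(M, K)` shifts the claim from `(N, s)` to `(K, s + 1)`. -/

namespace CategoryTheory

variable {C : Type*} [Category C] [Abelian C] [HasExt C]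

lemma Abelian.Ext.subsingleton_of_id_eq_sum {X Y : C} {ι : Type*} [Fintype ι]
    {Z : ι → C} (p : ∀ j, Y ⟶ Z j) (q : ∀ j, Z j ⟶ Y) (hpq : ∑ j, p j ≫ q j = 𝟙 Y) {n : ℕ}
    (hZ : ∀ j, Subsingleton (Ext X (Z j) n)) : Subsingleton (Ext X Y n) := by
  refine subsingleton_of_forall_eq 0 fun e => ?_
  rw [← e.comp_mk₀_id, ← hpq, Ext.mk₀_sum, Ext.comp_sum]
  refine Finset.sum_eq_zero fun j _ => ?_
  rw [← Ext.mk₀_comp_mk₀, ← Ext.comp_assoc_of_third_deg_zero, Subsingleton.elim (e.comp _ _) 0,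
    Ext.zero_comp]

lemma ShortComplex.ShortExact.subsingleton_ext_X₃ {S : ShortComplex C} (hS : S.ShortExact)
    (X : C) {n : ℕ} (h₂ : Subsingleton (Abelian.Ext X S.X₂ n))
    (h₁ : Subsingleton (Abelian.Ext X S.X₁ (n + 1))) : Subsingleton (Abelian.Ext X S.X₃ n) := by
  refine subsingleton_of_forall_eq 0 fun x₃ => ?_
  obtain ⟨x₂, rfl⟩ := Abelian.Ext.covariant_sequence_exact₃ X hS x₃ rfl (Subsingleton.elim _ _)
  rw [Subsingleton.elim x₂ 0, Abelian.Ext.zero_comp]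

end CategoryTheory

namespace ModuleCat

universe u

variable {R : Type u} [CommRing R]

lemma subsingleton_ext_of_projective (M P : ModuleCat.{u} R) [Module.Finite R P] [Projective P]
    {n : ℕ} (hR : Subsingleton (Abelian.Ext M (of R R) n)) : Subsingleton (Abelian.Ext M P n) := by
  obtain ⟨k, π, hπ⟩ := Module.Finite.exists_fin' R P
  obtain ⟨σ, hσ⟩ := Module.projective_lifting_property π LinearMap.id hπ
  refine Abelian.Ext.subsingleton_of_id_eq_sum (Z := fun _ : Fin k => of R R)
    (fun j => ofHom (LinearMap.proj j ∘ₗ σ))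
    (fun j => ofHom (π ∘ₗ LinearMap.single R (fun _ => R) j)) ?_ fun _ => hR
  ext x
  simpa [← map_sum, Finset.univ_sum_single] using LinearMap.congr_fun hσ x

theorem subsingleton_ext_of_hasProjectiveDimensionLT [IsNoetherianRing R] (M : ModuleCat.{u} R)
    (h : ℕ) (N : Type u) [AddCommGroup N] [Module R N] [Module.Finite R N]
    [HasProjectiveDimensionLT (of R N) (h + 1)] (s : ℕ)
    (hR : ∀ i, 1 ≤ i → i ≤ s + h + 1 → Subsingleton (Abelian.Ext M (of R R) i))
    {i : ℕ} (hi : 1 ≤ i) (his : i ≤ s + 1) : Subsingleton (Abelian.Ext M (of R N) i) := by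
  induction h generalizing N s i with
  | zero => exact subsingleton_ext_of_projective M _ (hR i hi (by omega))
  | succ h ih =>
    obtain ⟨F, _, _, _, _, f, hf⟩ := Module.exists_finite_presentation R N
    have hS := LinearMap.shortExact_shortComplexKer hf
    have : HasProjectiveDimensionLT (of R (LinearMap.ker f)) (h + 1) :=
      (hS.hasProjectiveDimensionLT_X₃_iff h inferInstance).mp ‹_›
    exact hS.subsingleton_ext_X₃ M (subsingleton_ext_of_projective M _ (hR i hi (by omega)))
      (ih _ (s + 1) (fun j hj₁ hj₂ => hR j hj₁ (by omega)) (by omega) (by omega))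

end ModuleCat

section ExtMod

variable {R : Type} [CommRing R]

lemma CategoryTheory.ProjectiveResolution.subsingleton_ext_succ_iff {M Y : ModuleCat R}
    (P : ProjectiveResolution M) (n : ℕ) :
    Subsingleton (Abelian.Ext M Y (n + 1)) ↔
      ∀ f : P.complex.X (n + 1) ⟶ Y, P.complex.d (n + 2) (n + 1) ≫ f = 0 →
        ∃ g : P.complex.X n ⟶ Y, P.complex.d (n + 1) n ≫ g = f := by
  refine ⟨fun _ f hf => (P.extMk_eq_zero_iff f (n + 2) rfl hf n rfl).mp
    (Subsingleton.elim _ _), fun h => subsingleton_of_forall_eq 0 fun α => ?_⟩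
  obtain ⟨f, hf, rfl⟩ := P.extMk_surjective α (n + 2) rfl
  exact (P.extMk_eq_zero_iff f (n + 2) rfl hf n rfl).mpr (h f hf)

lemma CategoryTheory.ProjectiveResolution.subsingleton_extMod_succ_iff {M Y : ModuleCat R}
    (P : ProjectiveResolution M) (n : ℕ) :
    Subsingleton (extMod R M Y (n + 1)) ↔
      ∀ f : P.complex.X (n + 1) ⟶ Y, P.complex.d (n + 2) (n + 1) ≫ f = 0 →
        ∃ g : P.complex.X n ⟶ Y, P.complex.d (n + 1) n ≫ g = f := by
  rw [← ModuleCat.isZero_iff_subsingleton, extMod, Iso.isZero_iff (P.isoExt (n + 1) Y),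
    ← HomologicalComplex.exactAt_iff_isZero_homology,
    HomologicalComplex.exactAt_iff' _ n (n + 1) (n + 2) (by simp) (by simp),
    ShortComplex.moduleCat_exact_iff]
  rfl

/-- `extMod` is Ext as a derived functor and `Abelian.Ext` is Ext in the derived category; both
are computed by any projective resolution of `M`. -/
lemma subsingleton_extMod_iff {M Y : ModuleCat R} {i : ℕ} (hi : i ≠ 0) :
    Subsingleton (extMod R M Y i) ↔ Subsingleton (Abelian.Ext M Y i) := by
  obtain ⟨n, rfl⟩ := Nat.exists_eq_succ_of_ne_zero hi
  obtain ⟨P⟩ : Nonempty (ProjectiveResolution M) := HasProjectiveResolution.out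
  rw [P.subsingleton_extMod_succ_iff, P.subsingleton_ext_succ_iff]

lemma hasProjectiveDimensionLT_of_pdim_eq {N : ModuleCat R} {h : ℕ} (hpd : pdim R N = h) :
    HasProjectiveDimensionLT N (h + 1) := by
  unfold pdim at hpd
  obtain ⟨_, hS, -⟩ := sInf_lt_iff.mp (hpd ▸ ENat.natCast_lt_top h)
  obtain ⟨m, hm, hvan⟩ := hpd ▸ csInf_mem ⟨_, hS⟩
  rw [Nat.cast_inj] at hm
  subst hm
  exact HasProjectiveDimensionLT.mk fun i hi Y e =>
    ((subsingleton_extMod_iff (by omega)).mp (hvan i (by omega) Y)).elim e 0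

end ExtMod

theorem stmt_16_general (R : Type) [CommRing R] [IsNoetherianRing R]
    (M N : Type) [AddCommGroup M] [Module R M] [AddCommGroup N] [Module R N]
    [Module.Finite R N]
    (h : ℕ) (hpd : pdim R (ModuleCat.of R N) = (h : ℕ∞)) (s : ℕ)
    (hExt : ∀ i : ℕ, 1 ≤ i → i ≤ s + h + 1 →
      Subsingleton (extMod R (ModuleCat.of R M) (ModuleCat.of R R) i)) :
    ∀ i : ℕ, 1 ≤ i → i ≤ s + 1 →
      Subsingleton (extMod R (ModuleCat.of R M) (ModuleCat.of R N) i) := by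
  have := hasProjectiveDimensionLT_of_pdim_eq hpd
  intro i hi his
  rw [subsingleton_extMod_iff (by omega)]
  exact ModuleCat.subsingleton_ext_of_hasProjectiveDimensionLT _ h N s
    (fun j hj₁ hj₂ => (subsingleton_extMod_iff (by omega)).mp (hExt j hj₁ hj₂)) hi his

/-- **Lemma (2.3.(2)).** Let `(R,m)` be a Noetherian local ring and `M, N` finitely
generated `R`-modules with `h = pd_R N < ∞`. If `Ext^i_R(M,R) = 0` for
`1 ≤ i ≤ s + h + 1` for some `s ≥ 0`, then `Ext^i_R(M,N) = 0` for `1 ≤ i ≤ s + 1`. -/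
theorem stmt_16 (R : Type) [CommRing R] [IsLocalRing R] [IsNoetherianRing R]
    (M N : Type) [AddCommGroup M] [Module R M] [AddCommGroup N] [Module R N]
    [Module.Finite R M] [Module.Finite R N]
    (h : ℕ) (hpd : pdim R (ModuleCat.of R N) = (h : ℕ∞)) (s : ℕ)
    (hExt : ∀ i : ℕ, 1 ≤ i → i ≤ s + h + 1 →
      Subsingleton (extMod R (ModuleCat.of R M) (ModuleCat.of R R) i)) :
    ∀ i : ℕ, 1 ≤ i → i ≤ s + 1 →
      Subsingleton (extMod R (ModuleCat.of R M) (ModuleCat.of R N) i) :=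
  stmt_16_general R M N h hpd s hExt
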